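/- Suppose κ ≥ n, k ≥ 1 odd, q > k. Then there is no solution θ ∈ C¹([0,∞)) of (s^δ(θ')^k)' + s^δ(b s θ' + κθ + c_{n,k}^{-1}|θ|^{q-1}θ) = 0 with θ(0) = γ > 0, θ'(0) = 0, that is strictly positive on all of [0,∞). -/

import Mathlib

/-!
The energy `J(s) = b s^{δ+1} θ + s^δ (θ')^k` vanishes at `0`, and since `b (δ + 1) = n ≤ κ` the
equation gives `J' = s^δ ((n - κ) θ - c⁻¹ θ^q) ≤ 0` as long as `θ > 0`. Hence
`b s θ + (θ')^k ≤ 0`. For odd `k > 1` this says `-θ' ≥ (b s θ)^{1/k}`, so `θ^{1 - 1/k}` decreases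
at least as fast as a multiple of `s^{1 + 1/k}` and must reach `0`. For `k = 1`, `J` is strictly
decreasing, so `J ≤ -m < 0` on `[1, ∞)`, and then `s^δ θ + m s` is eventually decreasing.
-/

open Set Filter

lemma exists_nonpos_of_hasDerivAt_add_nonpos {u v u' v' : ℝ → ℝ} {a : ℝ}
    (hu : ∀ x ≥ a, HasDerivAt u (u' x) x) (hv : ∀ x ≥ a, HasDerivAt v (v' x) x)
    (huv : ∀ x > a, u' x + v' x ≤ 0) (hv_top : Tendsto v atTop atTop) :
    ∃ x ≥ a, u x ≤ 0 := by
  have huv' : ∀ x ≥ a, HasDerivAt (fun x => u x + v x) (u' x + v' x) x :=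
    fun x hx => (hu x hx).add (hv x hx)
  have hanti : AntitoneOn (fun x => u x + v x) (Ici a) := by
    refine antitoneOn_of_hasDerivWithinAt_nonpos (f' := fun x => u' x + v' x) (convex_Ici a)
      (fun x hx => (huv' x hx).continuousAt.continuousWithinAt) (fun x hx => ?_)
      (fun x hx => ?_) <;> rw [interior_Ici, mem_Ioi] at hx
    · exact (huv' x hx.le).hasDerivWithinAt
    · exact huv x hx
  obtain ⟨x, hvx, hxa⟩ :=
    ((hv_top.eventually_ge_atTop (u a + v a)).and (eventually_ge_atTop a)).exists
  exact ⟨x, hxa, by linarith [hanti self_mem_Ici hxa hxa]⟩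

lemma rpow_inv_natCast_le_of_le_pow {k : ℕ} {x z : ℝ} (hk : Odd k) (hx : 0 ≤ x)
    (h : x ≤ z ^ k) : x ^ (k : ℝ)⁻¹ ≤ z := by
  have hz : 0 ≤ z := hk.pow_nonneg_iff.mp (hx.trans h)
  rwa [Real.rpow_inv_le_iff_of_pos hx hz (by exact_mod_cast hk.pos), Real.rpow_natCast]

lemma not_forall_pos_of_rpow_mul_le_neg_deriv {θ θ' : ℝ → ℝ} {b e : ℝ} (hb : 0 < b)
    (he₀ : 0 < e) (he₁ : e < 1) (hθ : ∀ s ≥ 1, HasDerivAt θ (θ' s) s)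
    (hsub : ∀ s ≥ 1, (b * s * θ s) ^ e ≤ -θ' s) : ¬ ∀ s ≥ 1, 0 < θ s := by
  intro hpos
  set A := (1 - e) / (1 + e) * b ^ e
  have hu : ∀ s ≥ 1, HasDerivAt (fun s => θ s ^ (1 - e))
      (θ' s * (1 - e) * θ s ^ (1 - e - 1)) s :=
    fun s hs => (hθ s hs).rpow_const (Or.inl (hpos s hs).ne')
  have hv : ∀ s ≥ (1 : ℝ), HasDerivAt (fun s => A * s ^ (1 + e))
      (A * ((1 + e) * s ^ (1 + e - 1))) s :=
    fun s hs => (Real.hasDerivAt_rpow_const (Or.inl (by positivity))).const_mul A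
  have hv_top : Tendsto (fun s : ℝ => A * s ^ (1 + e)) atTop atTop :=
    (tendsto_rpow_atTop (by linarith)).const_mul_atTop
      (mul_pos (div_pos (by linarith) (by linarith)) (Real.rpow_pos_of_pos hb e))
  have huv : ∀ s > (1 : ℝ),
      θ' s * (1 - e) * θ s ^ (1 - e - 1) + A * ((1 + e) * s ^ (1 + e - 1)) ≤ 0 := by
    intro s hs
    have hs0 : 0 < s := by linarith
    have hθs := hpos s hs.le
    have hsplit : (b * s * θ s) ^ e = b ^ e * s ^ e * θ s ^ e := by
      rw [Real.mul_rpow (by positivity) hθs.le, Real.mul_rpow hb.le hs0.le]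
    have hcancel : θ s ^ (1 - e - 1) * θ s ^ e = 1 := by
      rw [← Real.rpow_add hθs]; simp
    have hA : A * (1 + e) = (1 - e) * b ^ e := by unfold A; field_simp
    have key := mul_le_mul_of_nonneg_left (hsub s hs.le)
      (mul_nonneg (by linarith : (0 : ℝ) ≤ 1 - e) (Real.rpow_nonneg hθs.le (1 - e - 1)))
    have hlhs : (1 - e) * θ s ^ (1 - e - 1) * (b * s * θ s) ^ e = A * (1 + e) * s ^ e := by
      rw [hA, hsplit]; linear_combination ((1 - e) * b ^ e * s ^ e) * hcancel
    rw [add_sub_cancel_left]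
    linear_combination key - hlhs
  obtain ⟨s, hs, hθs⟩ := exists_nonpos_of_hasDerivAt_add_nonpos hu hv huv hv_top
  exact (Real.rpow_pos_of_pos (hpos s hs) _).not_ge hθs

lemma not_forall_pos_of_rpow_mul_deriv_add_le_neg {θ θ' : ℝ → ℝ} {b δ m : ℝ} (hb : 0 < b)
    (hm : 0 < m) (hθ : ∀ s ≥ 1, HasDerivAt θ (θ' s) s)
    (hsub : ∀ s ≥ 1, s ^ δ * (b * s * θ s + θ' s) ≤ -m) : ¬ ∀ s ≥ 1, 0 < θ s := by
  intro hpos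
  -- beyond `δ / b` (and `1`) we have `δ ≤ b s²`, which makes `(s^δ θ)' + m ≤ 0`
  set a := max 1 (δ / b)
  have hu : ∀ s ≥ a,
      HasDerivAt (fun s => s ^ δ * θ s) (δ * s ^ (δ - 1) * θ s + s ^ δ * θ' s) s :=
    fun s hs => (Real.hasDerivAt_rpow_const (Or.inl (by linarith [le_of_max_le_left hs]))).mul
      (hθ s (le_of_max_le_left hs))
  have hv : ∀ s ≥ a, HasDerivAt (fun s => m * s) m s :=
    fun s _ => by simpa using (hasDerivAt_id s).const_mul m
  have huv : ∀ s > a, δ * s ^ (δ - 1) * θ s + s ^ δ * θ' s + m ≤ 0 := by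
    intro s hs
    have hs1 : 1 ≤ s := (le_max_left _ _).trans hs.le
    have hδs : δ ≤ b * s * s := by
      have := (div_le_iff₀' hb).mp ((le_max_right _ _).trans hs.le)
      nlinarith [mul_le_mul_of_nonneg_left hs1 (mul_pos hb (by linarith : (0 : ℝ) < s)).le]
    have hθs := hpos s hs1
    have hP : 0 < s ^ (δ - 1) := by positivity
    have hsδ : s ^ δ = s ^ (δ - 1) * s := by
      rw [← Real.rpow_add_one (by positivity), sub_add_cancel]
    have hsub' := hsub s hs1
    rw [hsδ] at hsub' ⊢
    nlinarith [mul_le_mul_of_nonneg_left hδs (mul_pos hP hθs).le]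
  obtain ⟨s, hs, hθs⟩ := exists_nonpos_of_hasDerivAt_add_nonpos hu hv huv
    (tendsto_id.const_mul_atTop hm)
  have hs1 : 1 ≤ s := le_of_max_le_left hs
  exact (mul_pos (by positivity) (hpos s hs1)).not_ge hθs

-- The paper's `J_δ(s) = s^{δ+1}(bθ + s⁻¹(θ')^k)`, multiplied out so that it is defined at `s = 0`.
noncomputable def energy (b δ : ℝ) (k : ℕ) (θ θ' : ℝ → ℝ) (s : ℝ) : ℝ :=
  b * s ^ (δ + 1) * θ s + s ^ δ * θ' s ^ k

section Energy

variable {b δ κ c q s : ℝ} {k : ℕ} {θ θ' D : ℝ → ℝ}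

lemma energy_eq_rpow_mul (hs : 0 < s) :
    energy b δ k θ θ' s = s ^ δ * (b * s * θ s + θ' s ^ k) := by
  rw [energy, Real.rpow_add_one hs.ne']; ring

lemma energy_zero (hδ : 0 < δ) : energy b δ k θ θ' 0 = 0 := by
  simp [energy, Real.zero_rpow hδ.ne', Real.zero_rpow (by linarith : δ + 1 ≠ 0)]

lemma continuousOn_energy (hδ : 0 ≤ δ) (hθ : ContinuousOn θ (Ici 0))
    (hθ' : ContinuousOn θ' (Ici 0)) : ContinuousOn (energy b δ k θ θ') (Ici 0) := by
  have hrpow : ∀ p : ℝ, 0 ≤ p → ContinuousOn (fun s : ℝ => s ^ p) (Ici 0) :=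
    fun p hp s _ => (Real.continuousAt_rpow_const s p (Or.inr hp)).continuousWithinAt
  exact (continuousOn_const.mul (hrpow _ (by linarith))).mul hθ
    |>.add ((hrpow δ hδ).mul (hθ'.pow k))

lemma hasDerivAt_energy (hs : 0 < s) (hθ : HasDerivAt θ (θ' s) s)
    (hD : HasDerivAt (fun σ => σ ^ δ * θ' σ ^ k) (D s) s)
    (hode : D s + s ^ δ * (b * s * θ' s + κ * θ s + c⁻¹ * |θ s| ^ (q - 1) * θ s) = 0) :
    HasDerivAt (energy b δ k θ θ')
      (s ^ δ * ((b * (δ + 1) - κ) * θ s - c⁻¹ * |θ s| ^ (q - 1) * θ s)) s := by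
  have hpow : HasDerivAt (fun σ : ℝ => σ ^ (δ + 1)) ((δ + 1) * s ^ δ) s := by
    simpa using Real.hasDerivAt_rpow_const (p := δ + 1) (Or.inl hs.ne')
  refine ((hpow.const_mul b).mul hθ |>.add hD).congr_deriv ?_
  rw [Real.rpow_add_one hs.ne']
  linear_combination hode

lemma antitoneOn_energy (hδ : 0 ≤ δ) (hκ : b * (δ + 1) ≤ κ) (hc : 0 ≤ c)
    (hθ : ∀ s ≥ 0, HasDerivAt θ (θ' s) s) (hθ' : ContinuousOn θ' (Ici 0))
    (hD : ∀ s > 0, HasDerivAt (fun σ => σ ^ δ * θ' σ ^ k) (D s) s)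
    (hode : ∀ s > 0,
      D s + s ^ δ * (b * s * θ' s + κ * θ s + c⁻¹ * |θ s| ^ (q - 1) * θ s) = 0)
    (hpos : ∀ s > 0, 0 < θ s) : AntitoneOn (energy b δ k θ θ') (Ici 0) := by
  refine antitoneOn_of_hasDerivWithinAt_nonpos (convex_Ici 0)
    (f' := fun s => s ^ δ * ((b * (δ + 1) - κ) * θ s - c⁻¹ * |θ s| ^ (q - 1) * θ s))
    (continuousOn_energy hδ (fun s hs => (hθ s hs).continuousAt.continuousWithinAt) hθ')
    (fun s hs => ?_) (fun s hs => ?_) <;> rw [interior_Ici, mem_Ioi] at hs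
  · exact (hasDerivAt_energy hs (hθ s hs.le) (hD s hs) (hode s hs)).hasDerivWithinAt
  · have hθs := hpos s hs
    have hlin : (b * (δ + 1) - κ) * θ s ≤ 0 :=
      mul_nonpos_of_nonpos_of_nonneg (by linarith) hθs.le
    have hnonlin : 0 ≤ c⁻¹ * |θ s| ^ (q - 1) * θ s :=
      mul_nonneg (mul_nonneg (inv_nonneg.2 hc) (by positivity)) hθs.le
    exact mul_nonpos_of_nonneg_of_nonpos (by positivity) (by linarith)

lemma strictAntiOn_energy (hδ : 0 ≤ δ) (hκ : b * (δ + 1) ≤ κ) (hc : 0 < c)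
    (hθ : ∀ s ≥ 0, HasDerivAt θ (θ' s) s) (hθ' : ContinuousOn θ' (Ici 0))
    (hD : ∀ s > 0, HasDerivAt (fun σ => σ ^ δ * θ' σ ^ k) (D s) s)
    (hode : ∀ s > 0,
      D s + s ^ δ * (b * s * θ' s + κ * θ s + c⁻¹ * |θ s| ^ (q - 1) * θ s) = 0)
    (hpos : ∀ s > 0, 0 < θ s) : StrictAntiOn (energy b δ k θ θ') (Ici 0) := by
  refine strictAntiOn_of_hasDerivWithinAt_neg (convex_Ici 0)
    (f' := fun s => s ^ δ * ((b * (δ + 1) - κ) * θ s - c⁻¹ * |θ s| ^ (q - 1) * θ s))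
    (continuousOn_energy hδ (fun s hs => (hθ s hs).continuousAt.continuousWithinAt) hθ')
    (fun s hs => ?_) (fun s hs => ?_) <;> rw [interior_Ici, mem_Ioi] at hs
  · exact (hasDerivAt_energy hs (hθ s hs.le) (hD s hs) (hode s hs)).hasDerivWithinAt
  · have hθs := hpos s hs
    have hlin : (b * (δ + 1) - κ) * θ s ≤ 0 :=
      mul_nonpos_of_nonpos_of_nonneg (by linarith) hθs.le
    have hnonlin : 0 < c⁻¹ * |θ s| ^ (q - 1) * θ s :=
      mul_pos (mul_pos (inv_pos.2 hc) (Real.rpow_pos_of_pos (abs_pos.2 hθs.ne') _)) hθs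
    exact mul_neg_of_pos_of_neg (by positivity) (by linarith)

lemma rpow_inv_le_neg_of_energy_nonpos (hk : Odd k) (hs : 0 < s) (hb : 0 ≤ b) (hθs : 0 ≤ θ s)
    (hJ : energy b δ k θ θ' s ≤ 0) : (b * s * θ s) ^ (k : ℝ)⁻¹ ≤ -θ' s := by
  rw [energy_eq_rpow_mul hs] at hJ
  have hsum : b * s * θ s + θ' s ^ k ≤ 0 := nonpos_of_mul_nonpos_right hJ (by positivity)
  refine rpow_inv_natCast_le_of_le_pow hk (by positivity) ?_
  rw [hk.neg_pow]
  linarith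

end Energy

theorem stmt10_general (n k : ℕ) (q κ c δ b : ℝ) (hn : 2 < n) (hk : 1 ≤ k)
    (hkodd : Odd k) (hκ : (n : ℝ) ≤ κ)
    (hc : c = (1 / n) * (n.choose k))
    (hδ : δ = ((n : ℝ) * (k + 1) - 2 * k) / (2 * k)) (hb : b = 2 * k / (k + 1))
    (θ θ' D : ℝ → ℝ)
    (hθ : ∀ s ≥ (0 : ℝ), HasDerivAt θ (θ' s) s)
    (hθ'cont : ContinuousOn θ' (Set.Ici 0))
    (hD : ∀ s > (0 : ℝ),
      HasDerivAt (fun σ => σ ^ δ * (θ' σ) ^ k) (D s) s)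
    (hode : ∀ s > (0 : ℝ), D s +
        s ^ δ * (b * s * θ' s + κ * θ s + c⁻¹ * |θ s| ^ (q - 1) * θ s) = 0)
    (hpos : ∀ s ≥ (0 : ℝ), 0 < θ s) :
    False := by
  have hk₀ : (1 : ℝ) ≤ k := by exact_mod_cast hk
  have hn₀ : (2 : ℝ) < n := by exact_mod_cast hn
  have hδ₀ : 0 < δ := by rw [hδ]; apply div_pos <;> nlinarith
  have hb₀ : 0 < b := by rw [hb]; positivity
  have hκ' : b * (δ + 1) ≤ κ := by
    rwa [show b * (δ + 1) = n by rw [hb, hδ]; field_simp; ring]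
  have hpos₀ : ∀ s > 0, 0 < θ s := fun s hs => hpos s hs.le
  have hpos₁ : ∀ s ≥ 1, 0 < θ s := fun s hs => hpos s (by linarith)
  have hθ₁ : ∀ s ≥ 1, HasDerivAt θ (θ' s) s := fun s hs => hθ s (by linarith)
  obtain rfl | hk₁ := hk.eq_or_lt
  · have hc₀ : 0 < c := by rw [hc, Nat.choose_one_right]; positivity
    have hJ := strictAntiOn_energy hδ₀.le hκ' hc₀ hθ hθ'cont hD hode hpos₀
    have hJ₁ : energy b δ 1 θ θ' 1 < 0 :=
      energy_zero hδ₀ ▸ hJ self_mem_Ici (mem_Ici.2 zero_le_one) one_pos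
    refine not_forall_pos_of_rpow_mul_deriv_add_le_neg (δ := δ) hb₀ (neg_pos.2 hJ₁) hθ₁
      (fun s hs => ?_) hpos₁
    have hJs := hJ.antitoneOn (mem_Ici.2 zero_le_one) (mem_Ici.2 (by linarith)) hs
    rw [energy_eq_rpow_mul (by linarith), pow_one] at hJs
    linarith
  · have hJ := antitoneOn_energy hδ₀.le hκ' (by rw [hc]; positivity) hθ hθ'cont hD hode hpos₀
    refine not_forall_pos_of_rpow_mul_le_neg_deriv (e := (k : ℝ)⁻¹) hb₀ (by positivity)
      (inv_lt_one_of_one_lt₀ (by exact_mod_cast hk₁)) hθ₁ (fun s hs => ?_) hpos₁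
    have hs₀ : 0 < s := by linarith
    exact rpow_inv_le_neg_of_energy_nonpos hkodd hs₀ hb₀.le (hpos₁ s hs).le
      (energy_zero hδ₀ ▸ hJ self_mem_Ici hs₀.le hs₀.le)

/-- Nonexistence of globally positive solutions when `κ ≥ n`: no solution of
`(s^δ(θ')^k)' + s^δ(b s θ' + κθ + c_{n,k}^{-1}|θ|^{q-1}θ) = 0` with `θ(0) = γ > 0`,
`θ'(0) = 0` can be strictly positive on all of `[0,∞)`. -/
theorem stmt10 (n k : ℕ) (q κ c δ b γ : ℝ) (hn : 2 < n) (hk : 1 ≤ k)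
    (hkodd : Odd k) (hq : (k : ℝ) < q) (hκ : (n : ℝ) ≤ κ)
    (hc : c = (1 / n) * (n.choose k))
    (hδ : δ = ((n : ℝ) * (k + 1) - 2 * k) / (2 * k)) (hb : b = 2 * k / (k + 1))
    (hγpos : 0 < γ)
    (θ θ' D : ℝ → ℝ)
    (hθ : ∀ s ≥ (0 : ℝ), HasDerivAt θ (θ' s) s)
    (hθ'cont : ContinuousOn θ' (Set.Ici 0))
    (hD : ∀ s > (0 : ℝ),
      HasDerivAt (fun σ => σ ^ δ * (θ' σ) ^ k) (D s) s)
    (hode : ∀ s > (0 : ℝ), D s +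
        s ^ δ * (b * s * θ' s + κ * θ s + c⁻¹ * |θ s| ^ (q - 1) * θ s) = 0)
    (h0 : θ 0 = γ) (h0' : θ' 0 = 0)
    (hpos : ∀ s ≥ (0 : ℝ), 0 < θ s) :
    False :=
  stmt10_general n k q κ c δ b hn hk hkodd hκ hc hδ hb θ θ' D hθ hθ'cont hD hode hpos
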